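/- Let n ≥ 1 and let M be a symmetric n×n real matrix which is negative definite and satisfies M_{ij} ≥ 0 for all i ≠ j. Suppose moreover that the graph on {1,…,n} having an edge between i and j (i ≠ j) whenever M_{ij} > 0 is connected. If a, b ∈ ℝ^n satisfy (M a)_j ≥ (M b)_j for every j, then either a = b, or a_j < b_j for every j. -/

import Mathlib

/-!
Put `c = a - b`, so that `M c ≥ 0`. Pairing `M c⁺ = M c + M c⁻` with `c⁺` gives
`c⁺ ⬝ M c⁺ ≥ 0`, because `c⁺` and `c⁻` have disjoint supports and `M` is nonnegative off
the diagonal; negative definiteness forces `c⁺ = 0`, i.e. `c ≤ 0`. If `c v = 0`, then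
`0 ≤ (M c)_v = ∑ M_vi c_i` is a sum of nonpositive terms, so `c_u = 0` whenever `M_vu > 0`:
the zero set of `c` is closed under the positivity graph and, by connectedness, it is
either empty or everything.
-/

open Matrix

lemma SimpleGraph.Preconnected.mem_of_adj_closed {V : Type*} {G : SimpleGraph V}
    (hG : G.Preconnected) {S : Set V} (hS : ∀ u v, G.Adj u v → u ∈ S → v ∈ S)
    {s : V} (hs : s ∈ S) (t : V) : t ∈ S := by
  by_contra ht
  obtain ⟨w⟩ := hG s t
  obtain ⟨d, -, hd_fst, hd_snd⟩ := w.exists_boundary_dart S hs ht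
  exact hd_snd (hS _ _ d.adj hd_fst)

lemma Real.posPart_mul_negPart (x : ℝ) : x⁺ * x⁻ = 0 := by
  rcases le_total x 0 with hx | hx
  · rw [posPart_eq_zero.2 hx, zero_mul]
  · rw [negPart_eq_zero.2 hx, mul_zero]

namespace Matrix

variable {ι : Type*} [Fintype ι] {M : Matrix ι ι ℝ}

lemma dotProduct_mulVec_nonneg_of_mul_eq_zero (hoffdiag : ∀ i j, i ≠ j → 0 ≤ M i j)
    {p q : ι → ℝ} (hp : 0 ≤ p) (hq : 0 ≤ q) (hpq : ∀ i, p i * q i = 0) :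
    0 ≤ p ⬝ᵥ (M *ᵥ q) := by
  simp only [dotProduct, mulVec, Finset.mul_sum]
  refine Finset.sum_nonneg fun i _ => Finset.sum_nonneg fun j _ => ?_
  rcases eq_or_ne i j with rfl | hij
  · rw [mul_left_comm, hpq, mul_zero]
  · exact mul_nonneg (hp i) (mul_nonneg (hoffdiag i j hij) (hq j))

lemma nonpos_of_mulVec_nonneg (hnegdef : ∀ x : ι → ℝ, x ≠ 0 → x ⬝ᵥ (M *ᵥ x) < 0)
    (hoffdiag : ∀ i j, i ≠ j → 0 ≤ M i j) {c : ι → ℝ} (hc : 0 ≤ M *ᵥ c) : c ≤ 0 := by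
  rw [← posPart_eq_zero]
  by_contra hne
  have hsplit : c⁺ ⬝ᵥ (M *ᵥ c⁺) = c⁺ ⬝ᵥ (M *ᵥ c) + c⁺ ⬝ᵥ (M *ᵥ c⁻) := by
    rw [← dotProduct_add, ← mulVec_add, ← eq_add_of_sub_eq (posPart_sub_negPart c)]
  have hmain : 0 ≤ c⁺ ⬝ᵥ (M *ᵥ c) := dotProduct_nonneg_of_nonneg (posPart_nonneg c) hc
  have hcross : 0 ≤ c⁺ ⬝ᵥ (M *ᵥ c⁻) :=
    dotProduct_mulVec_nonneg_of_mul_eq_zero hoffdiag (posPart_nonneg c) (negPart_nonneg c)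
      fun i => Real.posPart_mul_negPart (c i)
  linarith [hnegdef _ hne]

lemma eq_zero_of_mulVec_nonneg_of_pos (hoffdiag : ∀ i j, i ≠ j → 0 ≤ M i j)
    {c : ι → ℝ} (hc : c ≤ 0) {v u : ι} (hMc : 0 ≤ (M *ᵥ c) v) (hcv : c v = 0)
    (hvu : 0 < M v u) : c u = 0 := by
  have hterm : ∀ i ∈ Finset.univ, M v i * c i ≤ 0 := fun i _ => by
    rcases eq_or_ne v i with rfl | hvi
    · rw [hcv, mul_zero]
    · exact mul_nonpos_of_nonneg_of_nonpos (hoffdiag v i hvi) (hc i)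
  have hsum : ∑ i, M v i * c i = 0 := le_antisymm (Finset.sum_nonpos hterm) hMc
  have hu := (Finset.sum_eq_zero_iff_of_nonpos hterm).1 hsum u (Finset.mem_univ u)
  exact (mul_eq_zero.1 hu).resolve_left hvu.ne'

lemma eq_zero_of_mulVec_nonneg_of_connected (hsymm : ∀ i j, M i j = M j i)
    (hoffdiag : ∀ i j, i ≠ j → 0 ≤ M i j)
    (hconn : (SimpleGraph.fromRel (fun i j => 0 < M i j)).Connected)
    {c : ι → ℝ} (hc_nonpos : c ≤ 0) (hc : 0 ≤ M *ᵥ c) {t : ι} (ht : c t = 0) : c = 0 := by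
  refine funext fun j => hconn.preconnected.mem_of_adj_closed (S := {i | c i = 0}) ?_ ht j
  rintro u v huv (hu : c u = 0)
  have hMuv : 0 < M u v := by
    obtain ⟨-, h | h⟩ := SimpleGraph.fromRel_adj _ u v |>.1 huv
    exacts [h, hsymm u v ▸ h]
  exact eq_zero_of_mulVec_nonneg_of_pos hoffdiag hc_nonpos (hc u) hu hMuv

end Matrix

theorem negativity_lemma_general (n : ℕ) (M : Matrix (Fin n) (Fin n) ℝ)
    (hsymm : ∀ i j, M i j = M j i)
    (hnegdef : ∀ x : Fin n → ℝ, x ≠ 0 → x ⬝ᵥ (M *ᵥ x) < 0)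
    (hoffdiag : ∀ i j, i ≠ j → 0 ≤ M i j)
    (hconn : (SimpleGraph.fromRel (fun i j => 0 < M i j)).Connected)
    (a b : Fin n → ℝ) (hab : ∀ j, (M *ᵥ b) j ≤ (M *ᵥ a) j) :
    a = b ∨ ∀ j, a j < b j := by
  have hc : 0 ≤ M *ᵥ (a - b) := fun j => by
    simpa only [mulVec_sub, Pi.sub_apply, Pi.zero_apply, sub_nonneg] using hab j
  have hc_nonpos : a - b ≤ 0 := nonpos_of_mulVec_nonneg hnegdef hoffdiag hc
  by_cases hzero : ∃ t, (a - b) t = 0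
  · obtain ⟨t, ht⟩ := hzero
    exact .inl <| sub_eq_zero.1 <|
      eq_zero_of_mulVec_nonneg_of_connected hsymm hoffdiag hconn hc_nonpos hc ht
  · push Not at hzero
    exact .inr fun j => sub_neg.1 <| (hc_nonpos j).lt_of_ne (hzero j)

/-- Negativity lemma (linear algebra form): if `M` is a symmetric negative definite
real `n × n` matrix with nonnegative off-diagonal entries whose positivity graph is
connected, and `(M a)_j ≥ (M b)_j` for all `j`, then `a = b` or `a_j < b_j` for all `j`. -/
theorem negativity_lemma (n : ℕ) (hn : 1 ≤ n) (M : Matrix (Fin n) (Fin n) ℝ)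
    (hsymm : ∀ i j, M i j = M j i)
    (hnegdef : ∀ x : Fin n → ℝ, x ≠ 0 → x ⬝ᵥ (M *ᵥ x) < 0)
    (hoffdiag : ∀ i j, i ≠ j → 0 ≤ M i j)
    (hconn : (SimpleGraph.fromRel (fun i j => 0 < M i j)).Connected)
    (a b : Fin n → ℝ) (hab : ∀ j, (M *ᵥ b) j ≤ (M *ᵥ a) j) :
    a = b ∨ ∀ j, a j < b j :=
  negativity_lemma_general n M hsymm hnegdef hoffdiag hconn a b hab
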